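/- arXiv:2209.12509 — 2 statements merged into one kernel-verified Lean document; each statement's English description precedes it below -/
import Mathlib

section
/- Let $L\in\mathbb{N}$ and let $f:\mathbb{Z}^d\to\mathbb{R}$ be $L$-periodic (i.e. $f(\cdot+k)=f$ for all $k\in L\mathbb{Z}^d$) with $\sum_{z\in\Lambda_L} f(z)=0$ where $\Lambda_L = \mathbb{Z}^d\cap[0,L)^d$. Then the discrete Poincaré inequality $\frac{1}{L}\Big(L^{-d}\sum_{z\in\Lambda_L}|f(z)|^2\Big)^{1/2} \le \Big(L^{-d}\sum_{z\in\Lambda_L}|\nabla f(z)|^2\Big)^{1/2}$ holds, where $\nabla f(z) = (f(z+e_1)-f(z),\dots,f(z+e_d)-f(z))$. -/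
open scoped BigOperators

noncomputable section

/-- The discrete box `Λ_L = ℤ^d ∩ [0,L)^d`. -/
def latticeBox (d L : ℕ) : Finset (Fin d → ℤ) :=
  Fintype.piFinset fun _ : Fin d => Finset.Ico (0 : ℤ) (L : ℤ)

section PoinAux
open Finset


lemma poinAux_pt_bound {L : ℕ} [NeZero L] (g : ZMod L → ℝ) (s t : ZMod L) :
    (g s - g t)^2 ≤ (L:ℝ) * ∑ u : ZMod L, (g (u+1) - g u)^2 := by
  set m := (s - t).val with hm
  have hmL : m < L := ZMod.val_lt _
  set F : ℕ → ℝ := fun j => g (t + (j : ZMod L)) with hF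
  have tel : ∑ j ∈ range m, (F (j+1) - F j) = g s - g t := by
    rw [Finset.sum_range_sub F m]
    have : t + ((m : ℕ) : ZMod L) = s := by
      rw [hm, ZMod.natCast_rightInverse (s - t)]; ring
    simp [hF, this]
  have CS : (∑ j ∈ range m, (F (j+1) - F j))^2 ≤ (m:ℝ) * ∑ j ∈ range m, (F (j+1) - F j)^2 := by
    simpa using sq_sum_le_card_mul_sum_sq (s := range m) (f := fun j => F (j+1) - F j)
  have hterm : ∀ j : ℕ, (F (j+1) - F j)^2 = (fun u => (g (u+1) - g u)^2) (t + (j:ZMod L)) := by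
    intro j; simp only [hF]; push_cast; rw [add_assoc]
  have hinj : ∀ a ∈ range m, ∀ b ∈ range m,
      (fun j : ℕ => t + (j : ZMod L)) a = (fun j : ℕ => t + (j : ZMod L)) b → a = b := by
    intro a ha b hb hab
    have h1 : ((a : ZMod L)) = (b : ZMod L) := add_left_cancel hab
    have h2 := congrArg ZMod.val h1
    rwa [ZMod.val_cast_of_lt ((mem_range.1 ha).trans hmL),
      ZMod.val_cast_of_lt ((mem_range.1 hb).trans hmL)] at h2
  have hpath : ∑ j ∈ range m, (F (j+1) - F j)^2 ≤ ∑ u : ZMod L, (g (u+1) - g u)^2 := by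
    simp_rw [hterm]
    have h3 : ∑ j ∈ range m, (fun u => (g (u + 1) - g u) ^ 2) (t + (j:ZMod L))
        = ∑ u ∈ (range m).image (fun j : ℕ => t + (j:ZMod L)), (g (u+1) - g u)^2 :=
      (Finset.sum_image (f := fun u => (g (u+1) - g u)^2) hinj).symm
    exact h3.trans_le (Finset.sum_le_univ_sum_of_nonneg (fun u => sq_nonneg _))
  calc (g s - g t)^2 = (∑ j ∈ range m, (F (j+1) - F j))^2 := by rw [tel]
    _ ≤ (m:ℝ) * ∑ j ∈ range m, (F (j+1) - F j)^2 := CS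
    _ ≤ (L:ℝ) * ∑ u : ZMod L, (g (u+1) - g u)^2 := by
        apply mul_le_mul (by exact_mod_cast hmL.le) hpath
          (Finset.sum_nonneg fun j _ => sq_nonneg _) (by positivity)

lemma poinAux_sum_sub_sq {L : ℕ} [NeZero L] (g : ZMod L → ℝ) :
    ∑ s : ZMod L, ∑ t : ZMod L, (g s - g t)^2
      = 2*(L:ℝ)*∑ t : ZMod L, g t^2 - 2*(∑ t : ZMod L, g t)^2 := by
  have h : ∀ s t : ZMod L, (g s - g t)^2 = g s^2 + g t^2 - 2*(g s * g t) := fun s t => by ring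
  simp_rw [h, Finset.sum_sub_distrib, Finset.sum_add_distrib, Finset.sum_const,
    Finset.card_univ, ZMod.card, nsmul_eq_mul, ← Finset.mul_sum]
  rw [← Finset.sum_mul]
  ring

lemma poinAux_oneD {L : ℕ} [NeZero L] (g : ZMod L → ℝ) :
    2*(L:ℝ) * ∑ t : ZMod L, g t^2
      ≤ 2*(∑ t : ZMod L, g t)^2 + (L:ℝ)^3 * ∑ t : ZMod L, (g (t+1) - g t)^2 := by
  have h1 := poinAux_sum_sub_sq g
  have h2 : ∑ s : ZMod L, ∑ t : ZMod L, (g s - g t)^2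
      ≤ (L:ℝ) * (L:ℝ) * ((L:ℝ) * ∑ u : ZMod L, (g (u+1) - g u)^2) := by
    calc ∑ s : ZMod L, ∑ t : ZMod L, (g s - g t)^2
        ≤ ∑ _s : ZMod L, ∑ _t : ZMod L, (L:ℝ) * ∑ u : ZMod L, (g (u+1) - g u)^2 :=
          Finset.sum_le_sum fun s _ => Finset.sum_le_sum fun t _ => poinAux_pt_bound g s t
      _ = (L:ℝ) * (L:ℝ) * ((L:ℝ) * ∑ u : ZMod L, (g (u+1) - g u)^2) := by
          simp [Finset.sum_const, Finset.card_univ, ZMod.card]; ring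
  nlinarith []

lemma poinAux_sum_pi_succ {n : ℕ} {α : Type*} [Fintype α] (F : (Fin (n+1) → α) → ℝ) :
    ∑ y : Fin (n+1) → α, F y = ∑ t : α, ∑ x : Fin n → α, F (Fin.cons t x) := by
  calc ∑ y : Fin (n+1) → α, F y
      = ∑ p : α × (Fin n → α), F (Fin.cons p.1 p.2) :=
        (Fintype.sum_equiv (Fin.consEquiv fun _ => α) (fun p => F (Fin.cons p.1 p.2)) F
          (fun p => rfl)).symm
    _ = ∑ t : α, ∑ x : Fin n → α, F (Fin.cons t x) := Fintype.sum_prod_type _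

lemma poinAux_cons_add_single_zero {n L : ℕ} (t : ZMod L) (x : Fin n → ZMod L) :
    (Fin.cons t x : Fin (n+1) → ZMod L) + Pi.single (0 : Fin (n+1)) (1 : ZMod L)
      = Fin.cons (t+1) x := by
  funext i
  refine Fin.cases ?_ (fun j => ?_) i
  · simp
  · simp [Pi.single_eq_of_ne (Fin.succ_ne_zero j)]

lemma poinAux_cons_add_single_succ {n L : ℕ} (t : ZMod L) (x : Fin n → ZMod L) (j : Fin n) :
    (Fin.cons t x : Fin (n+1) → ZMod L) + Pi.single j.succ (1 : ZMod L)
      = Fin.cons t (x + Pi.single j 1) := by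
  funext i
  refine Fin.cases ?_ (fun i => ?_) i
  · simp [Pi.single_eq_of_ne (Ne.symm (Fin.succ_ne_zero j))]
  · simp [Pi.single_apply, Fin.succ_inj]

lemma poinAux_torusP {L : ℕ} [NeZero L] :
    ∀ (n : ℕ) (g : (Fin n → ZMod L) → ℝ),
    2 * (L:ℝ)^n * ∑ x : Fin n → ZMod L, g x^2
      ≤ 2 * (∑ x : Fin n → ZMod L, g x)^2
        + (L:ℝ)^(n+2) * ∑ x : Fin n → ZMod L, ∑ i, (g (x + Pi.single i 1) - g x)^2 := by
  intro n
  induction n with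
  | zero =>
    intro g
    simp [Fintype.sum_unique]
  | succ n IH =>
    intro g
    set S : ZMod L → ℝ := fun t => ∑ x : Fin n → ZMod L, g (Fin.cons t x) with hS
    set A : ZMod L → ℝ := fun t => ∑ x : Fin n → ZMod L, (g (Fin.cons t x))^2 with hA
    set D : ZMod L → ℝ := fun t =>
      ∑ x : Fin n → ZMod L, (g (Fin.cons (t+1) x) - g (Fin.cons t x))^2 with hD
    set G : ZMod L → ℝ := fun t => ∑ x : Fin n → ZMod L,
      ∑ j : Fin n, (g (Fin.cons t (x + Pi.single j 1)) - g (Fin.cons t x))^2 with hG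
    have e1 : ∑ y : Fin (n+1) → ZMod L, g y ^ 2 = ∑ t : ZMod L, A t :=
      poinAux_sum_pi_succ (fun y => g y ^ 2)
    have e2 : ∑ y : Fin (n+1) → ZMod L, g y = ∑ t : ZMod L, S t :=
      poinAux_sum_pi_succ g
    have e3 : ∑ y : Fin (n+1) → ZMod L, ∑ i, (g (y + Pi.single i 1) - g y)^2
        = ∑ t : ZMod L, (D t + G t) := by
      refine (poinAux_sum_pi_succ (fun y => ∑ i : Fin (n+1), (g (y + Pi.single i 1) - g y)^2)).trans ?_
      refine Finset.sum_congr rfl (fun t _ => ?_)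
      have hx : ∀ x : Fin n → ZMod L,
          ∑ i : Fin (n+1), (g (Fin.cons t x + Pi.single i 1) - g (Fin.cons t x))^2
          = (g (Fin.cons (t+1) x) - g (Fin.cons t x))^2
            + ∑ j : Fin n, (g (Fin.cons t (x + Pi.single j 1)) - g (Fin.cons t x))^2 := by
        intro x
        rw [Fin.sum_univ_succ, poinAux_cons_add_single_zero]
        congr 1
        refine Finset.sum_congr rfl (fun j _ => ?_)
        rw [poinAux_cons_add_single_succ]
      simp_rw [hx]
      rw [Finset.sum_add_distrib]
    have sumIH : 2*(L:ℝ)^n * ∑ t : ZMod L, A t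
        ≤ 2*∑ t : ZMod L, (S t)^2 + (L:ℝ)^(n+2) * ∑ t : ZMod L, G t := by
      have h := Finset.sum_le_sum (s := (Finset.univ : Finset (ZMod L)))
        (fun t _ => IH (fun x => g (Fin.cons t x)))
      rw [Finset.sum_add_distrib] at h
      simp_rw [← Finset.mul_sum] at h
      exact h
    have one := poinAux_oneD S
    have CSsum : ∑ t : ZMod L, (S (t+1) - S t)^2 ≤ (L:ℝ)^n * ∑ t : ZMod L, D t := by
      rw [Finset.mul_sum]
      refine Finset.sum_le_sum (fun t _ => ?_)
      have hst : S (t+1) - S t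
          = ∑ x : Fin n → ZMod L, (g (Fin.cons (t+1) x) - g (Fin.cons t x)) := by
        rw [hS, Finset.sum_sub_distrib]
      rw [hst]
      have h := sq_sum_le_card_mul_sum_sq (s := (Finset.univ : Finset (Fin n → ZMod L)))
        (f := fun x => g (Fin.cons (t+1) x) - g (Fin.cons t x))
      rw [Finset.card_univ, Fintype.card_fun, ZMod.card] at h
      simpa [hD] using h
    have hL0 : (0:ℝ) ≤ (L:ℝ) := Nat.cast_nonneg L
    rw [e1, e2, e3, Finset.sum_add_distrib]
    calc 2*(L:ℝ)^(n+1) * ∑ t : ZMod L, A t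
        = (L:ℝ) * (2*(L:ℝ)^n * ∑ t : ZMod L, A t) := by ring
      _ ≤ (L:ℝ) * (2*∑ t : ZMod L, (S t)^2 + (L:ℝ)^(n+2) * ∑ t : ZMod L, G t) :=
          mul_le_mul_of_nonneg_left sumIH hL0
      _ = 2*(L:ℝ)*∑ t : ZMod L, (S t)^2 + (L:ℝ)^(n+3) * ∑ t : ZMod L, G t := by ring
      _ ≤ (2*(∑ t : ZMod L, S t)^2 + (L:ℝ)^3 * ∑ t : ZMod L, (S (t+1) - S t)^2)
            + (L:ℝ)^(n+3) * ∑ t : ZMod L, G t := by linarith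
      _ ≤ (2*(∑ t : ZMod L, S t)^2 + (L:ℝ)^3 * ((L:ℝ)^n * ∑ t : ZMod L, D t))
            + (L:ℝ)^(n+3) * ∑ t : ZMod L, G t := by
          have h := mul_le_mul_of_nonneg_left CSsum (by positivity : (0:ℝ) ≤ (L:ℝ)^3)
          linarith
      _ = 2*(∑ t : ZMod L, S t)^2
            + (L:ℝ)^(n+1+2) * (∑ t : ZMod L, D t + ∑ t : ZMod L, G t) := by ring


end PoinAux

/-- discrete Poincaré inequality with constant 1 for `L`-periodic,
mean-free functions on `ℤ^d`:
`(1/L)(L^{-d} ∑_{z∈Λ_L} |f(z)|²)^{1/2} ≤ (L^{-d} ∑_{z∈Λ_L} |∇f(z)|²)^{1/2}`. -/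
theorem statement6 (d L : ℕ) (hd : 0 < d) (hL : 0 < L)
    (f : (Fin d → ℤ) → ℝ)
    (hper : ∀ z k : Fin d → ℤ, f (z + (L : ℤ) • k) = f z)
    (hmean : ∑ z ∈ latticeBox d L, f z = 0) :
    (1 / (L : ℝ)) * Real.sqrt (((L : ℝ)^d)⁻¹ * ∑ z ∈ latticeBox d L, (f z)^2)
      ≤ Real.sqrt (((L : ℝ)^d)⁻¹ *
          ∑ z ∈ latticeBox d L, ∑ i : Fin d, (f (z + Pi.single i 1) - f z)^2) := by
  haveI : NeZero L := ⟨hL.ne'⟩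
  set π : (Fin d → ZMod L) → (Fin d → ℤ) := fun x i => ((x i).val : ℤ) with hπ
  have congr_f : ∀ z w : Fin d → ℤ, (∀ i, ((z i : ZMod L)) = (w i : ZMod L)) → f z = f w := by
    intro z w h
    have hk : z = w + (L:ℤ) • (fun i => (z i - w i) / (L:ℤ)) := by
      funext i
      have hdvd : (L:ℤ) ∣ (z i - w i) := by
        have hmod := (ZMod.intCast_eq_intCast_iff _ _ _).1 (h i)
        exact Int.ModEq.dvd hmod.symm
      simp only [Pi.add_apply, Pi.smul_apply, smul_eq_mul]
      rw [Int.mul_ediv_cancel' hdvd]; ring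
    rw [hk, hper]
  have cast_π : ∀ (x : Fin d → ZMod L) (i : Fin d), ((π x i : ℤ) : ZMod L) = x i := by
    intro x i
    simp only [hπ]
    push_cast
    exact ZMod.natCast_rightInverse (x i)
  have sum_transfer : ∀ F : (Fin d → ℤ) → ℝ,
      (∀ z w, (∀ i, ((z i : ZMod L)) = (w i : ZMod L)) → F z = F w) →
      ∑ z ∈ latticeBox d L, F z = ∑ x : Fin d → ZMod L, F (π x) := by
    intro F hF
    refine Finset.sum_nbij' (fun z => fun i => ((z i : ZMod L))) π ?_ ?_ ?_ ?_ ?_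
    · intro z _; exact Finset.mem_univ _
    · intro x _
      simp only [latticeBox, Fintype.mem_piFinset, Finset.mem_Ico, hπ]
      intro i
      refine ⟨Int.natCast_nonneg _, ?_⟩
      exact_mod_cast ZMod.val_lt (x i)
    · intro z hz
      funext i
      simp only [latticeBox, Fintype.mem_piFinset, Finset.mem_Ico] at hz
      simp only [hπ]
      rw [ZMod.val_intCast (z i)]
      exact Int.emod_eq_of_lt (hz i).1 (hz i).2
    · intro x _
      funext i
      exact cast_π x i
    · intro z _
      exact hF _ _ (fun i => (cast_π (fun i => ((z i : ZMod L))) i).symm)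
  have congr_sq : ∀ z w, (∀ i, ((z i : ZMod L)) = (w i : ZMod L)) →
      (f z)^2 = (f w)^2 := fun z w h => by rw [congr_f z w h]
  have hsq : ∑ z ∈ latticeBox d L, (f z)^2 = ∑ x : Fin d → ZMod L, (f (π x))^2 :=
    sum_transfer (fun z => (f z)^2) congr_sq
  have hmean' : ∑ x : Fin d → ZMod L, f (π x) = 0 := by
    rw [← sum_transfer f congr_f]; exact hmean
  have single_cast : ∀ (i j : Fin d), (((Pi.single i 1 : Fin d → ℤ) j : ZMod L))
      = (Pi.single i 1 : Fin d → ZMod L) j := by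
    intro i j
    simp [Pi.single_apply, apply_ite (fun a : ℤ => (a : ZMod L))]
  have key : ∀ (x : Fin d → ZMod L) (i : Fin d),
      f (π x + Pi.single i 1) = f (π (x + Pi.single i 1)) := by
    intro x i
    apply congr_f
    intro j
    rw [Pi.add_apply, cast_π (x + Pi.single i 1) j, Pi.add_apply]
    push_cast
    rw [cast_π x j, single_cast]
  have hgrad : ∑ z ∈ latticeBox d L, ∑ i : Fin d, (f (z + Pi.single i 1) - f z)^2
      = ∑ x : Fin d → ZMod L, ∑ i : Fin d,
          (f (π (x + Pi.single i 1)) - f (π x))^2 := by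
    refine (sum_transfer (fun z => ∑ i : Fin d, (f (z + Pi.single i 1) - f z)^2) ?_).trans ?_
    · intro z w h
      refine Finset.sum_congr rfl (fun i _ => ?_)
      rw [congr_f z w h, congr_f (z + Pi.single i 1) (w + Pi.single i 1) ?_]
      intro j
      rw [Pi.add_apply, Pi.add_apply]
      push_cast
      rw [h j]
    · refine Finset.sum_congr rfl (fun x _ => Finset.sum_congr rfl (fun i _ => ?_))
      rw [key x i]
  have main := poinAux_torusP (L := L) d (fun x => f (π x))
  rw [hmean'] at main
  have hL' : (0:ℝ) < (L:ℝ) := by exact_mod_cast hL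
  have hBpos : (0:ℝ) ≤ ∑ z ∈ latticeBox d L, ∑ i : Fin d, (f (z + Pi.single i 1) - f z)^2 :=
    Finset.sum_nonneg fun z _ => Finset.sum_nonneg fun i _ => sq_nonneg _
  have hApos : (0:ℝ) ≤ ∑ x : Fin d → ZMod L, (f (π x))^2 :=
    Finset.sum_nonneg fun x _ => sq_nonneg _
  have hBpos' : (0:ℝ) ≤ ∑ x : Fin d → ZMod L, ∑ i : Fin d,
      (f (π (x + Pi.single i 1)) - f (π x))^2 :=
    Finset.sum_nonneg fun x _ => Finset.sum_nonneg fun i _ => sq_nonneg _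
  have hLd : (0:ℝ) < (L:ℝ)^d := by positivity
  have hpow : (L:ℝ)^(d+2) = (L:ℝ)^d * (L:ℝ)^2 := by ring
  rw [hpow] at main
  have h4 : (L:ℝ)^d * ∑ x : Fin d → ZMod L, (f (π x))^2
      ≤ (L:ℝ)^d * ((L:ℝ)^2 * ∑ x : Fin d → ZMod L, ∑ i : Fin d,
          (f (π (x + Pi.single i 1)) - f (π x))^2) := by
    nlinarith [main, mul_nonneg hLd.le hApos]
  have hAB : ∑ x : Fin d → ZMod L, (f (π x))^2
      ≤ (L:ℝ)^2 * ∑ x : Fin d → ZMod L, ∑ i : Fin d,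
          (f (π (x + Pi.single i 1)) - f (π x))^2 :=
    le_of_mul_le_mul_left h4 hLd
  rw [hsq, hgrad]
  rw [show (1/(L:ℝ)) = Real.sqrt (((L:ℝ)^2)⁻¹) by
    rw [Real.sqrt_inv, Real.sqrt_sq hL'.le, one_div]]
  rw [← Real.sqrt_mul (by positivity)]
  apply Real.sqrt_le_sqrt
  have step : (((L:ℝ)^2)⁻¹ * (((L:ℝ)^d)⁻¹ * ∑ x : Fin d → ZMod L, (f (π x))^2))
      = ((L:ℝ)^d)⁻¹ * (((L:ℝ)^2)⁻¹ * ∑ x : Fin d → ZMod L, (f (π x))^2) := by ring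
  rw [step]
  apply mul_le_mul_of_nonneg_left _ (by positivity)
  rw [inv_mul_le_iff₀ (by positivity)]
  exact hAB
end
end

section
/- Let $Y$ be a separable Hilbert space, $\mathcal{A}:Y\to Y^*$ a bounded, symmetric, linear operator with $\langle\mathcal{A}y,y\rangle \ge c\|y\|^2$ for some $c>0$, let $\mathcal{R}:Y\to[0,\infty]$ be convex, lower semicontinuous, positively 1-homogeneous with $\mathcal{R}(0)=0$, and let $\ell\in W^{1,1}((0,T);Y^*)$. Set $\mathcal{E}(t,y) = \tfrac12\langle\mathcal{A}y,y\rangle - \langle\ell(t),y\rangle$. If $y\in W^{1,1}((0,T);Y)$ is an energetic solution (satisfying global stability and the energy balance), then $\|\dot{y}(t)\|_Y \le \tfrac{1}{c}\|\dot\ell(t)\|_{Y^*}$ for almost every $t\in[0,T]$. -/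
/-!
Stability at time `s` says that `ℓ s - A (y s)` is a subgradient of `R` at `0`, so integrating
against `y'` bounds the dissipation on `[s, t]` from below by `⟪ℓ s - A (y s), y t - y s⟫`.
Inserting this into the energy balance between `s` and `t` and expanding the quadratic energy gives
`½ ⟪A (y t - y s), y t - y s⟫ ≤ ∫_s^t ⟪ℓ' σ, y t - y σ⟫ dσ`.
At a common left Lebesgue point `t` of `y'` and `ℓ'`, dividing by `(t - s)²` and letting `s ↑ t`
turns this into `⟪A (y' t), y' t⟫ ≤ ⟪ℓ' t, y' t⟫`; coercivity and Cauchy–Schwarz give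
`c ‖y' t‖ ≤ ‖ℓ' t‖`.
-/

open scoped ENNReal RealInnerProductSpace
open MeasureTheory Filter Set Topology

noncomputable section

section LebesguePoint

variable {E : Type*} [NormedAddCommGroup E]

def leftMeanOsc (f : ℝ → E) (t s : ℝ) : ℝ :=
  ⨍ σ in Icc s t, ‖f σ - f t‖

def IsLeftLebesguePoint (f : ℝ → E) (t : ℝ) : Prop :=
  Tendsto (leftMeanOsc f t) (𝓝[<] t) (𝓝 0)

theorem ae_isLeftLebesguePoint {f : ℝ → E} (hf : LocallyIntegrable f volume) :
    ∀ᵐ t, IsLeftLebesguePoint f t := by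
  filter_upwards [(IsUnifLocDoublingMeasure.vitaliFamily volume 1).ae_tendsto_average_norm_sub hf]
    with t ht
  exact ht.comp (Real.tendsto_Icc_vitaliFamily_left t)

theorem IsLeftLebesguePoint.congr {f g : ℝ → E} {a t : ℝ} (hf : IsLeftLebesguePoint f t)
    (ha : a < t) (hfg : EqOn f g (Ioc a t)) : IsLeftLebesguePoint g t := by
  refine hf.congr' ?_
  filter_upwards [Ioo_mem_nhdsLT ha] with s hs
  refine setAverage_congr_fun measurableSet_Icc (ae_of_all _ fun σ hσ => ?_)
  rw [hfg ⟨hs.1.trans_le hσ.1, hσ.2⟩, hfg ⟨ha, le_rfl⟩]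

theorem ae_isLeftLebesguePoint_of_integrableOn {f : ℝ → E} {a b : ℝ}
    (hf : IntegrableOn f (Ioc a b)) : ∀ᵐ t, t ∈ Ioc a b → IsLeftLebesguePoint f t := by
  have hloc := (hf.integrable_indicator measurableSet_Ioc).locallyIntegrable
  filter_upwards [ae_isLeftLebesguePoint hloc] with t ht htab
  exact ht.congr htab.1 fun σ hσ => indicator_of_mem (Ioc_subset_Ioc_right htab.2 hσ) f

theorem integral_Ioc_norm_sub_eq_mul_leftMeanOsc (f : ℝ → E) {s t : ℝ} (hst : s < t) :
    ∫ σ in Ioc s t, ‖f σ - f t‖ = (t - s) * leftMeanOsc f t s := by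
  rw [leftMeanOsc, setAverage_eq, Real.volume_real_Icc_of_le hst.le, integral_Icc_eq_integral_Ioc,
    smul_eq_mul, ← mul_assoc, mul_inv_cancel₀ (sub_pos.mpr hst).ne', one_mul]

end LebesguePoint

section Primitive

variable {E : Type*} [NormedAddCommGroup E] [NormedSpace ℝ E] {F F' : ℝ → E} {a s t : ℝ}

theorem continuousOn_Icc_of_sub_eq_integral (hF' : IntegrableOn F' (Ioc s t))
    (hF : ∀ σ ∈ Icc s t, F t - F σ = ∫ τ in σ..t, F' τ) : ContinuousOn F (Icc s t) := by
  rcases le_or_gt s t with hst | hst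
  · have hint : IntegrableOn F' (uIcc s t) := by
      rwa [uIcc_of_le hst, integrableOn_Icc_iff_integrableOn_Ioc]
    have hprim : ContinuousOn (fun σ => ∫ τ in σ..t, F' τ) (Icc s t) := by
      simpa only [uIcc_of_le hst] using intervalIntegral.continuousOn_primitive_interval_left hint
    refine ((continuousOn_const (c := F t)).sub hprim).congr fun σ hσ => ?_
    show F σ = F t - ∫ τ in σ..t, F' τ
    rw [← hF σ hσ, sub_sub_cancel]
  · rw [Icc_eq_empty hst.not_ge]
    exact continuousOn_empty F

variable [CompleteSpace E]

theorem norm_sub_sub_smul_le_mul_leftMeanOsc (hst : s < t) (hF' : IntegrableOn F' (Ioc s t))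
    (hF : ∀ σ ∈ Icc s t, F t - F σ = ∫ τ in σ..t, F' τ) {σ : ℝ} (hσ : σ ∈ Icc s t) :
    ‖F t - F σ - (t - σ) • F' t‖ ≤ (t - s) * leftMeanOsc F' t s := by
  have hconst : IntegrableOn (fun _ => F' t) (Ioc s t) := integrableOn_const measure_Ioc_lt_top.ne
  have hrem : F t - F σ - (t - σ) • F' t = ∫ τ in Ioc σ t, (F' τ - F' t) := by
    rw [integral_sub (hF'.mono_set (Ioc_subset_Ioc_left hσ.1))
        (hconst.mono_set (Ioc_subset_Ioc_left hσ.1)), setIntegral_const,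
      Real.volume_real_Ioc_of_le hσ.2, hF σ hσ, intervalIntegral.integral_of_le hσ.2]
  rw [hrem, ← integral_Ioc_norm_sub_eq_mul_leftMeanOsc F' hst]
  calc ‖∫ τ in Ioc σ t, (F' τ - F' t)‖ ≤ ∫ τ in Ioc σ t, ‖F' τ - F' t‖ :=
        norm_integral_le_integral_norm _
    _ ≤ ∫ τ in Ioc s t, ‖F' τ - F' t‖ :=
        setIntegral_mono_set (hF'.sub hconst).norm (ae_of_all _ fun _ => norm_nonneg _)
          (Ioc_subset_Ioc_left hσ.1).eventuallyLE

theorem tendsto_slope_left_of_isLeftLebesguePoint (ha : a < t) (hF' : IntegrableOn F' (Ioc a t))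
    (hF : ∀ σ ∈ Icc a t, F t - F σ = ∫ τ in σ..t, F' τ) (hFt : IsLeftLebesguePoint F' t) :
    Tendsto (fun s => (t - s)⁻¹ • (F t - F s)) (𝓝[<] t) (𝓝 (F' t)) := by
  rw [tendsto_iff_norm_sub_tendsto_zero]
  refine squeeze_zero' (Eventually.of_forall fun _ => norm_nonneg _) ?_ hFt
  filter_upwards [Ioo_mem_nhdsLT ha] with s hs
  have hh : 0 < t - s := sub_pos.2 hs.2
  have hrem := norm_sub_sub_smul_le_mul_leftMeanOsc hs.2
    (hF'.mono_set (Ioc_subset_Ioc_left hs.1.le))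
    (fun σ hσ => hF σ ⟨hs.1.le.trans hσ.1, hσ.2⟩) (left_mem_Icc.2 hs.2.le)
  rwa [show (t - s)⁻¹ • (F t - F s) - F' t = (t - s)⁻¹ • (F t - F s - (t - s) • F' t) by
      rw [smul_sub _ (F t - F s), smul_smul, inv_mul_cancel₀ hh.ne', one_smul],
    norm_smul, norm_inv, Real.norm_of_nonneg hh.le, inv_mul_le_iff₀ hh]

end Primitive

theorem MeasureTheory.IntegrableOn.inner_continuousOn_of_subset {X Y : Type*} [TopologicalSpace X]
    [MeasurableSpace X] [OpensMeasurableSpace X] {μ : Measure X} [NormedAddCommGroup Y]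
    [InnerProductSpace ℝ Y] [SecondCountableTopologyEither X Y] {f g : X → Y} {A K : Set X}
    (hf : IntegrableOn f A μ) (hg : ContinuousOn g K) (hK : IsCompact K) (hA : MeasurableSet A)
    (hAK : A ⊆ K) : IntegrableOn (fun x => ⟪f x, g x⟫) A μ := by
  obtain ⟨C, hC⟩ := hK.exists_bound_of_continuousOn hg
  refine Integrable.mono' (hf.norm.mul_const C)
    (hf.aestronglyMeasurable.inner ((hg.mono hAK).aestronglyMeasurable hA)) ?_
  filter_upwards [ae_restrict_mem hA] with x hx
  exact (norm_inner_le_norm _ _).trans (mul_le_mul_of_nonneg_left (hC x (hAK hx)) (norm_nonneg _))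

section SecondOrder

variable {E : Type*} [NormedAddCommGroup E] [InnerProductSpace ℝ E] [CompleteSpace E]
  {F F' G' : ℝ → E} {a s t : ℝ}

theorem norm_integral_inner_sub_sub_le (hst : s < t) (hF' : IntegrableOn F' (Ioc s t))
    (hG' : IntegrableOn G' (Ioc s t)) (hF : ∀ σ ∈ Icc s t, F t - F σ = ∫ τ in σ..t, F' τ) :
    ‖(∫ σ in Ioc s t, ⟪G' σ, F t - F σ⟫) - (t - s) ^ 2 / 2 * ⟪G' t, F' t⟫‖ ≤
      (t - s) ^ 2 * (leftMeanOsc G' t s * (‖F' t‖ + leftMeanOsc F' t s)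
        + ‖G' t‖ * leftMeanOsc F' t s) := by
  set ωF := leftMeanOsc F' t s
  have hrem σ (hσ : σ ∈ Icc s t) : ‖F t - F σ - (t - σ) • F' t‖ ≤ (t - s) * ωF :=
    norm_sub_sub_smul_le_mul_leftMeanOsc hst hF' hF hσ
  have hincr σ (hσ : σ ∈ Icc s t) : ‖F t - F σ‖ ≤ (t - s) * (‖F' t‖ + ωF) := by
    have hlin : ‖(t - σ) • F' t‖ ≤ (t - s) * ‖F' t‖ := by
      rw [norm_smul, Real.norm_of_nonneg (sub_nonneg.2 hσ.2)]
      exact mul_le_mul_of_nonneg_right (by linarith [hσ.1]) (norm_nonneg _)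
    calc ‖F t - F σ‖ = ‖(t - σ) • F' t + (F t - F σ - (t - σ) • F' t)‖ := by
          rw [add_sub_cancel]
      _ ≤ (t - s) * (‖F' t‖ + ωF) := by
          have := norm_add_le ((t - σ) • F' t) (F t - F σ - (t - σ) • F' t)
          linarith [hrem σ hσ]
  have hpoint : ∀ σ ∈ Ioc s t, ‖⟪G' σ, F t - F σ⟫ - (t - σ) * ⟪G' t, F' t⟫‖ ≤
      ‖G' σ - G' t‖ * ((t - s) * (‖F' t‖ + ωF)) + ‖G' t‖ * ((t - s) * ωF) := by
    intro σ hσ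
    have hσ' : σ ∈ Icc s t := Ioc_subset_Icc_self hσ
    have hsplit : ⟪G' σ, F t - F σ⟫ - (t - σ) * ⟪G' t, F' t⟫ =
        ⟪G' σ - G' t, F t - F σ⟫ + ⟪G' t, F t - F σ - (t - σ) • F' t⟫ := by
      simp only [inner_sub_left, inner_sub_right, real_inner_smul_right]; ring
    rw [hsplit]
    refine (norm_add_le _ _).trans (add_le_add ?_ ?_) <;>
      refine (norm_inner_le_norm _ _).trans (mul_le_mul_of_nonneg_left ?_ (norm_nonneg _))
    exacts [hincr σ hσ', hrem σ hσ']
  have hinner : IntegrableOn (fun σ => ⟪G' σ, F t - F σ⟫) (Ioc s t) :=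
    hG'.inner_continuousOn_of_subset
      (continuousOn_const.sub (continuousOn_Icc_of_sub_eq_integral hF' hF)) isCompact_Icc
      measurableSet_Ioc Ioc_subset_Icc_self
  have hlinear : IntegrableOn (fun σ => (t - σ) * ⟪G' t, F' t⟫) (Ioc s t) :=
    ((continuous_const.sub continuous_id).mul continuous_const).integrableOn_Ioc
  have hconst : IntegrableOn (fun _ => G' t) (Ioc s t) := integrableOn_const measure_Ioc_lt_top.ne
  have hG'osc : IntegrableOn (fun σ => ‖G' σ - G' t‖) (Ioc s t) := (hG'.sub hconst).norm
  have hmean : ∫ σ in Ioc s t, (t - σ) = (t - s) ^ 2 / 2 := by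
    rw [← intervalIntegral.integral_of_le hst.le, intervalIntegral.integral_sub
      intervalIntegrable_const intervalIntegral.intervalIntegrable_id,
      intervalIntegral.integral_const, integral_id, smul_eq_mul]
    ring
  calc ‖(∫ σ in Ioc s t, ⟪G' σ, F t - F σ⟫) - (t - s) ^ 2 / 2 * ⟪G' t, F' t⟫‖
      = ‖∫ σ in Ioc s t, (⟪G' σ, F t - F σ⟫ - (t - σ) * ⟪G' t, F' t⟫)‖ := by
        rw [integral_sub hinner hlinear, integral_mul_const, hmean]
    _ ≤ ∫ σ in Ioc s t, (‖G' σ - G' t‖ * ((t - s) * (‖F' t‖ + ωF)) + ‖G' t‖ * ((t - s) * ωF)) :=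
        norm_integral_le_of_norm_le ((hG'osc.mul_const _).add (integrableOn_const
          measure_Ioc_lt_top.ne)) ((ae_restrict_iff' measurableSet_Ioc).2 (ae_of_all _ hpoint))
    _ = (t - s) ^ 2 * (leftMeanOsc G' t s * (‖F' t‖ + ωF) + ‖G' t‖ * ωF) := by
        rw [integral_add (hG'osc.mul_const _) (integrableOn_const measure_Ioc_lt_top.ne),
          integral_mul_const, integral_Ioc_norm_sub_eq_mul_leftMeanOsc G' hst, setIntegral_const,
          Real.volume_real_Ioc_of_le hst.le, smul_eq_mul]
        ring

theorem tendsto_integral_inner_sub_div_sq (ha : a < t) (hF' : IntegrableOn F' (Ioc a t))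
    (hG' : IntegrableOn G' (Ioc a t)) (hF : ∀ σ ∈ Icc a t, F t - F σ = ∫ τ in σ..t, F' τ)
    (hFt : IsLeftLebesguePoint F' t) (hGt : IsLeftLebesguePoint G' t) :
    Tendsto (fun s => ((t - s) ^ 2)⁻¹ * ∫ σ in Ioc s t, ⟪G' σ, F t - F σ⟫) (𝓝[<] t)
      (𝓝 (⟪G' t, F' t⟫ / 2)) := by
  have hbound : Tendsto (fun s => leftMeanOsc G' t s * (‖F' t‖ + leftMeanOsc F' t s)
      + ‖G' t‖ * leftMeanOsc F' t s) (𝓝[<] t) (𝓝 0) := by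
    simpa using (hGt.mul (tendsto_const_nhds.add hFt)).add (tendsto_const_nhds.mul hFt)
  rw [tendsto_iff_norm_sub_tendsto_zero]
  refine squeeze_zero' (Eventually.of_forall fun _ => norm_nonneg _) ?_ hbound
  filter_upwards [Ioo_mem_nhdsLT ha] with s hs
  have hh : 0 < (t - s) ^ 2 := pow_pos (sub_pos.2 hs.2) 2
  have hest := norm_integral_inner_sub_sub_le hs.2 (hF'.mono_set (Ioc_subset_Ioc_left hs.1.le))
    (hG'.mono_set (Ioc_subset_Ioc_left hs.1.le)) (fun σ hσ => hF σ ⟨hs.1.le.trans hσ.1, hσ.2⟩)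
  rwa [show ∀ I : ℝ, ((t - s) ^ 2)⁻¹ * I - ⟪G' t, F' t⟫ / 2 =
      ((t - s) ^ 2)⁻¹ * (I - (t - s) ^ 2 / 2 * ⟪G' t, F' t⟫) from fun I => by
        rw [mul_sub, ← mul_assoc, ← mul_div_assoc, inv_mul_cancel₀ hh.ne', one_div_mul_eq_div],
    norm_mul, norm_inv, Real.norm_of_nonneg hh.le, inv_mul_le_iff₀ hh]

theorem inner_map_self_le_of_isLeftLebesguePoint (A : E →L[ℝ] E) (ha : a < t)
    (hF' : IntegrableOn F' (Ioc a t)) (hG' : IntegrableOn G' (Ioc a t))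
    (hF : ∀ σ ∈ Icc a t, F t - F σ = ∫ τ in σ..t, F' τ) (hFt : IsLeftLebesguePoint F' t)
    (hGt : IsLeftLebesguePoint G' t)
    (hineq : ∀ s ∈ Ioo a t,
      1 / 2 * ⟪A (F t - F s), F t - F s⟫ ≤ ∫ σ in Ioc s t, ⟪G' σ, F t - F σ⟫) :
    ⟪A (F' t), F' t⟫ ≤ ⟪G' t, F' t⟫ := by
  have hslope := tendsto_slope_left_of_isLeftLebesguePoint ha hF' hF hFt
  have hrhs := (tendsto_integral_inner_sub_div_sq ha hF' hG' hF hFt hGt).const_mul 2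
  rw [mul_div_cancel₀ _ two_ne_zero] at hrhs
  refine le_of_tendsto_of_tendsto (((A.continuous.tendsto _).comp hslope).inner hslope) hrhs ?_
  filter_upwards [Ioo_mem_nhdsLT ha] with s hs
  have hh : 0 < ((t - s) ^ 2)⁻¹ := inv_pos.2 (pow_pos (sub_pos.2 hs.2) 2)
  have := mul_le_mul_of_nonneg_left (hineq s hs) hh.le
  simp only [Function.comp_apply, map_smul, real_inner_smul_left, real_inner_smul_right]
  rw [← mul_assoc, ← mul_inv, ← pow_two]
  linarith

end SecondOrder

section QuadraticEnergy

variable {Y : Type*} [NormedAddCommGroup Y] [InnerProductSpace ℝ Y] {A : Y →L[ℝ] Y}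

def quadEnergy (A : Y →L[ℝ] Y) (ℓ z : Y) : ℝ :=
  1 / 2 * ⟪A z, z⟫ - ⟪ℓ, z⟫

theorem quadEnergy_add (hA : (A : Y →ₗ[ℝ] Y).IsSymmetric) (ℓ z w : Y) :
    quadEnergy A ℓ (z + w) = quadEnergy A ℓ z + ⟪A z, w⟫ + 1 / 2 * ⟪A w, w⟫ - ⟪ℓ, w⟫ := by
  have hwz : ⟪A w, z⟫ = ⟪A z, w⟫ := (hA w z).trans (real_inner_comm _ _)
  simp only [quadEnergy, map_add, inner_add_left, inner_add_right, hwz]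
  ring

theorem inner_sub_map_le_of_stable (hA : (A : Y →ₗ[ℝ] Y).IsSymmetric) {R : Y → ℝ≥0∞}
    (hhom : ∀ α : ℝ, 0 ≤ α → ∀ v : Y, R (α • v) = ENNReal.ofReal α * R v) {ℓ y : Y}
    (hstab : ∀ z, ENNReal.ofReal (quadEnergy A ℓ y - quadEnergy A ℓ z) ≤ R (z - y))
    {v : Y} (hv : R v ≠ ⊤) : ⟪ℓ - A y, v⟫ ≤ (R v).toReal := by
  have hstep : ∀ h : ℝ, 0 < h → ⟪ℓ - A y, v⟫ ≤ (R v).toReal + h / 2 * ⟪A v, v⟫ := by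
    intro h hh
    have hst := hstab (y + h • v)
    rw [add_sub_cancel_left, hhom h hh.le, ENNReal.ofReal_le_iff_le_toReal
      (ENNReal.mul_ne_top ENNReal.ofReal_ne_top hv), ENNReal.toReal_mul,
      ENNReal.toReal_ofReal hh.le, quadEnergy_add hA] at hst
    simp only [map_smul, real_inner_smul_left, real_inner_smul_right, inner_sub_left] at hst ⊢
    nlinarith
  have hlim : Tendsto (fun h : ℝ => (R v).toReal + h / 2 * ⟪A v, v⟫) (𝓝[>] 0)
      (𝓝 (R v).toReal) := by
    have hcont : Continuous fun h : ℝ => (R v).toReal + h / 2 * ⟪A v, v⟫ := by fun_prop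
    simpa using (hcont.tendsto 0).mono_left nhdsWithin_le_nhds
  exact ge_of_tendsto hlim (eventually_nhdsWithin_of_forall hstep)

theorem inner_integral_le_toReal_lintegral [CompleteSpace Y] {α : Type*} [MeasurableSpace α]
    {μ : Measure α} {f : α → Y} (hf : Integrable f μ) {R : Y → ℝ≥0∞}
    (hRf : AEMeasurable (fun x => R (f x)) μ) (hfin : ∫⁻ x, R (f x) ∂μ ≠ ⊤) {ξ : Y}
    (hξ : ∀ v, R v ≠ ⊤ → ⟪ξ, v⟫ ≤ (R v).toReal) :
    ⟪ξ, ∫ x, f x ∂μ⟫ ≤ (∫⁻ x, R (f x) ∂μ).toReal := by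
  have hlt := ae_lt_top' hRf hfin
  rw [← integral_inner hf, ← integral_toReal hRf hlt]
  exact integral_mono_ae (hf.const_inner ξ) (integrable_toReal_of_lintegral_ne_top hRf hfin)
    (hlt.mono fun x hx => hξ _ hx.ne)

end QuadraticEnergy

theorem sub_add_toReal_lintegral_eq_of_balance {e p : ℝ → ℝ} {D : ℝ → ℝ≥0∞} {a T : ℝ}
    (hp : IntegrableOn p (Ioc a T))
    (hbal : ∀ t ∈ Icc a T, (∫⁻ σ in Ioc a t, D σ) ≠ ⊤ ∧
      e t + (∫⁻ σ in Ioc a t, D σ).toReal = e a - ∫ σ in a..t, p σ)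
    {s t : ℝ} (hs : a ≤ s) (hst : s ≤ t) (ht : t ≤ T) :
    (∫⁻ σ in Ioc s t, D σ) ≠ ⊤ ∧
      e t - e s + (∫⁻ σ in Ioc s t, D σ).toReal = -∫ σ in Ioc s t, p σ := by
  obtain ⟨hfin_s, hbal_s⟩ := hbal s ⟨hs, hst.trans ht⟩
  obtain ⟨hfin_t, hbal_t⟩ := hbal t ⟨hs.trans hst, ht⟩
  rw [← Ioc_union_Ioc_eq_Ioc hs hst, lintegral_union measurableSet_Ioc
    (Ioc_disjoint_Ioc_of_le le_rfl)] at hfin_t hbal_t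
  have hfin := (ENNReal.add_ne_top.1 hfin_t).2
  refine ⟨hfin, ?_⟩
  have hint : ∀ u v, a ≤ u → u ≤ v → v ≤ T → IntervalIntegrable p volume u v := fun u v hu huv hv =>
    (intervalIntegrable_iff_integrableOn_Ioc_of_le huv).2 (hp.mono_set (Ioc_subset_Ioc hu hv))
  have hadd := intervalIntegral.integral_add_adjacent_intervals (hint a s le_rfl hs (hst.trans ht))
    (hint s t hs hst ht)
  rw [ENNReal.toReal_add hfin_s hfin] at hbal_t
  rw [intervalIntegral.integral_of_le hst] at hadd
  linarith

section EnergeticSolution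

variable {Y : Type*} [NormedAddCommGroup Y] [InnerProductSpace ℝ Y] [CompleteSpace Y]
  [SecondCountableTopology Y] {A : Y →L[ℝ] Y} {R : Y → ℝ≥0∞} {ℓ ℓ' y y' : ℝ → Y} {T : ℝ}

theorem half_inner_map_sub_le_integral (hA : (A : Y →ₗ[ℝ] Y).IsSymmetric)
    (hlsc : LowerSemicontinuous R)
    (hhom : ∀ α : ℝ, 0 ≤ α → ∀ v : Y, R (α • v) = ENNReal.ofReal α * R v)
    (hℓ' : IntegrableOn ℓ' (Ioc 0 T))
    (hℓ : ∀ s ∈ Icc 0 T, ∀ t ∈ Icc 0 T, ℓ t - ℓ s = ∫ σ in s..t, ℓ' σ)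
    (hy' : IntegrableOn y' (Ioc 0 T))
    (hy : ∀ s ∈ Icc 0 T, ∀ t ∈ Icc 0 T, y t - y s = ∫ σ in s..t, y' σ)
    (hstab : ∀ t ∈ Icc 0 T, ∀ z : Y,
      ENNReal.ofReal (quadEnergy A (ℓ t) (y t) - quadEnergy A (ℓ t) z) ≤ R (z - y t))
    (hbal : ∀ t ∈ Icc 0 T, (∫⁻ s in Ioc 0 t, R (y' s)) ≠ ⊤ ∧
      quadEnergy A (ℓ t) (y t) + (∫⁻ s in Ioc 0 t, R (y' s)).toReal
        = quadEnergy A (ℓ 0) (y 0) - ∫ s in 0..t, ⟪ℓ' s, y s⟫)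
    {s t : ℝ} (hs : 0 ≤ s) (hst : s ≤ t) (ht : t ≤ T) :
    1 / 2 * ⟪A (y t - y s), y t - y s⟫ ≤ ∫ σ in Ioc s t, ⟪ℓ' σ, y t - y σ⟫ := by
  borelize Y
  have hsI : s ∈ Icc 0 T := ⟨hs, hst.trans ht⟩
  have htI : t ∈ Icc 0 T := ⟨hs.trans hst, ht⟩
  have hsub : Ioc s t ⊆ Ioc 0 T := Ioc_subset_Ioc hs ht
  have hycont : ContinuousOn y (Icc 0 T) := continuousOn_Icc_of_sub_eq_integral hy'
    fun σ hσ => hy σ hσ T ⟨hσ.1.trans hσ.2, le_rfl⟩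
  have hpower : IntegrableOn (fun σ => ⟪ℓ' σ, y σ⟫) (Ioc 0 T) :=
    hℓ'.inner_continuousOn_of_subset hycont isCompact_Icc measurableSet_Ioc Ioc_subset_Icc_self
  obtain ⟨hfin, hdiff⟩ := sub_add_toReal_lintegral_eq_of_balance
    (e := fun t => quadEnergy A (ℓ t) (y t)) hpower hbal hs hst ht
  have hdiss : ⟪ℓ s - A (y s), y t - y s⟫ ≤ (∫⁻ σ in Ioc s t, R (y' σ)).toReal := by
    have := inner_integral_le_toReal_lintegral (hy'.mono_set hsub)
      (hlsc.measurable.comp_aemeasurable (hy'.mono_set hsub).aemeasurable) hfin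
      fun v hv => inner_sub_map_le_of_stable hA hhom (hstab s hsI) hv
    rwa [← intervalIntegral.integral_of_le hst, ← hy s hsI t htI] at this
  have hload : ∫ σ in Ioc s t, ⟪ℓ' σ, y t⟫ = ⟪ℓ t - ℓ s, y t⟫ := by
    simp_rw [real_inner_comm (y t)]
    rw [integral_inner (hℓ'.mono_set hsub), ← intervalIntegral.integral_of_le hst,
      hℓ s hsI t htI]
  have henergy := quadEnergy_add hA (ℓ s) (y s) (y t - y s)
  rw [add_sub_cancel] at henergy
  have hsplit : ∫ σ in Ioc s t, ⟪ℓ' σ, y t - y σ⟫ =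
      (∫ σ in Ioc s t, ⟪ℓ' σ, y t⟫) - ∫ σ in Ioc s t, ⟪ℓ' σ, y σ⟫ := by
    rw [← integral_sub ((hℓ'.mono_set hsub).inner_const (y t)) (hpower.mono_set hsub)]
    simp_rw [inner_sub_right]
  rw [hsplit, hload]
  simp only [quadEnergy, inner_sub_left, inner_sub_right] at hdiff hdiss henergy ⊢
  linarith

end EnergeticSolution

theorem norm_le_of_coercive {Y : Type*} [NormedAddCommGroup Y] [InnerProductSpace ℝ Y]
    {A : Y →L[ℝ] Y} {c : ℝ} (hc : 0 < c) (hcoer : ∀ y : Y, c * ‖y‖ ^ 2 ≤ ⟪A y, y⟫) {v w : Y}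
    (h : ⟪A v, v⟫ ≤ ⟪w, v⟫) : ‖v‖ ≤ 1 / c * ‖w‖ := by
  have hcs : c * ‖v‖ * ‖v‖ ≤ ‖w‖ * ‖v‖ := by
    linarith [hcoer v, real_inner_le_norm w v]
  rcases (norm_nonneg v).eq_or_lt with h0 | hpos
  · rw [← h0]; positivity
  · rw [one_div_mul_eq_div, le_div_iff₀ hc, mul_comm]
    exact le_of_mul_le_mul_right hcs hpos

theorem statement9_general {Y : Type*} [NormedAddCommGroup Y] [InnerProductSpace ℝ Y]
    [CompleteSpace Y] [SecondCountableTopology Y]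
    (T : ℝ)
    (A : Y →L[ℝ] Y) (hsym : ∀ u v : Y, ⟪A u, v⟫ = ⟪u, A v⟫)
    (c : ℝ) (hc : 0 < c) (hcoer : ∀ y : Y, c * ‖y‖^2 ≤ ⟪A y, y⟫)
    (R : Y → ℝ≥0∞)
    (hlsc : LowerSemicontinuous R)
    (hhom : ∀ α : ℝ, 0 ≤ α → ∀ v : Y, R (α • v) = ENNReal.ofReal α * R v)
    -- ℓ ∈ W^{1,1}((0,T); Y*): absolutely continuous with integrable derivative ℓ'
    (ℓ ℓ' : ℝ → Y)
    (hℓint : IntervalIntegrable ℓ' volume 0 T)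
    (hℓFTC : ∀ s ∈ Set.Icc (0:ℝ) T, ∀ t ∈ Set.Icc (0:ℝ) T,
      ℓ t - ℓ s = ∫ σ in s..t, ℓ' σ)
    -- y ∈ W^{1,1}((0,T); Y)
    (y y' : ℝ → Y)
    (hyint : IntervalIntegrable y' volume 0 T)
    (hyFTC : ∀ s ∈ Set.Icc (0:ℝ) T, ∀ t ∈ Set.Icc (0:ℝ) T,
      y t - y s = ∫ σ in s..t, y' σ)
    (E : ℝ → Y → ℝ)
    (hE : ∀ t z, E t z = (1/2) * ⟪A z, z⟫ - ⟪ℓ t, z⟫)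
    -- global stability
    (hstab : ∀ t ∈ Set.Icc (0:ℝ) T, ∀ z : Y,
      ENNReal.ofReal (E t (y t) - E t z) ≤ R (z - y t))
    -- energy balance
    (hbal : ∀ t ∈ Set.Icc (0:ℝ) T,
      (∫⁻ s in Set.Ioc (0:ℝ) t, R (y' s)) ≠ ⊤ ∧
      E t (y t) + (∫⁻ s in Set.Ioc (0:ℝ) t, R (y' s)).toReal
        = E 0 (y 0) - ∫ s in (0:ℝ)..t, ⟪ℓ' s, y s⟫) :
    ∀ᵐ t ∂(volume : Measure ℝ), t ∈ Set.Icc (0:ℝ) T →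
      ‖y' t‖ ≤ (1 / c) * ‖ℓ' t‖ := by
  obtain rfl : E = fun t => quadEnergy A (ℓ t) := funext fun t => funext (hE t)
  have hy' : IntegrableOn y' (Ioc 0 T) := hyint.1
  have hℓ' : IntegrableOn ℓ' (Ioc 0 T) := hℓint.1
  filter_upwards [ae_isLeftLebesguePoint_of_integrableOn hy',
    ae_isLeftLebesguePoint_of_integrableOn hℓ', volume.ae_ne 0] with t hyt hℓt ht0 ht
  have htT : t ∈ Ioc 0 T := ⟨ht.1.lt_of_ne' ht0, ht.2⟩
  have hquad : ⟪A (y' t), y' t⟫ ≤ ⟪ℓ' t, y' t⟫ :=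
    inner_map_self_le_of_isLeftLebesguePoint A htT.1 (hy'.mono_set (Ioc_subset_Ioc_right htT.2))
      (hℓ'.mono_set (Ioc_subset_Ioc_right htT.2))
      (fun σ hσ => hyFTC σ ⟨hσ.1, hσ.2.trans htT.2⟩ t ht) (hyt htT) (hℓt htT)
      fun s hs => half_inner_map_sub_le_integral hsym hlsc hhom hℓ' hℓFTC hy' hyFTC hstab hbal
        hs.1.le hs.2.le ht.2
  exact norm_le_of_coercive hc hcoer hquad

/-- a priori bound for energetic solutions of a quadratic evolutionary
rate-independent system: `‖ẏ(t)‖ ≤ (1/c)‖ℓ̇(t)‖` for a.e. `t ∈ [0,T]`. -/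
theorem statement9 {Y : Type*} [NormedAddCommGroup Y] [InnerProductSpace ℝ Y]
    [CompleteSpace Y] [SecondCountableTopology Y]
    (T : ℝ) (hT : 0 < T)
    (A : Y →L[ℝ] Y) (hsym : ∀ u v : Y, ⟪A u, v⟫ = ⟪u, A v⟫)
    (c : ℝ) (hc : 0 < c) (hcoer : ∀ y : Y, c * ‖y‖^2 ≤ ⟪A y, y⟫)
    (R : Y → ℝ≥0∞)
    (hconv : ∀ u v : Y, ∀ t : ℝ, 0 ≤ t → t ≤ 1 →
      R (t • u + (1 - t) • v) ≤ ENNReal.ofReal t * R u + ENNReal.ofReal (1 - t) * R v)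
    (hlsc : LowerSemicontinuous R)
    (hhom : ∀ α : ℝ, 0 ≤ α → ∀ v : Y, R (α • v) = ENNReal.ofReal α * R v)
    (hR0 : R 0 = 0)
    -- ℓ ∈ W^{1,1}((0,T); Y*): absolutely continuous with integrable derivative ℓ'
    (ℓ ℓ' : ℝ → Y)
    (hℓint : IntervalIntegrable ℓ' volume 0 T)
    (hℓFTC : ∀ s ∈ Set.Icc (0:ℝ) T, ∀ t ∈ Set.Icc (0:ℝ) T,
      ℓ t - ℓ s = ∫ σ in s..t, ℓ' σ)
    -- y ∈ W^{1,1}((0,T); Y)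
    (y y' : ℝ → Y)
    (hyint : IntervalIntegrable y' volume 0 T)
    (hyFTC : ∀ s ∈ Set.Icc (0:ℝ) T, ∀ t ∈ Set.Icc (0:ℝ) T,
      y t - y s = ∫ σ in s..t, y' σ)
    (E : ℝ → Y → ℝ)
    (hE : ∀ t z, E t z = (1/2) * ⟪A z, z⟫ - ⟪ℓ t, z⟫)
    -- global stability
    (hstab : ∀ t ∈ Set.Icc (0:ℝ) T, ∀ z : Y,
      ENNReal.ofReal (E t (y t) - E t z) ≤ R (z - y t))
    -- energy balance
    (hbal : ∀ t ∈ Set.Icc (0:ℝ) T,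
      (∫⁻ s in Set.Ioc (0:ℝ) t, R (y' s)) ≠ ⊤ ∧
      E t (y t) + (∫⁻ s in Set.Ioc (0:ℝ) t, R (y' s)).toReal
        = E 0 (y 0) - ∫ s in (0:ℝ)..t, ⟪ℓ' s, y s⟫) :
    ∀ᵐ t ∂(volume : Measure ℝ), t ∈ Set.Icc (0:ℝ) T →
      ‖y' t‖ ≤ (1 / c) * ‖ℓ' t‖ :=
  statement9_general T A hsym c hc hcoer R hlsc hhom ℓ ℓ' hℓint hℓFTC y y' hyint hyFTC E hE hstab
    hbal
end
end
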